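/- Fix n, u_0 ∈ L²(Ω), and set C = (‖J‖_∞ + 2‖R‖_∞ + ‖G‖_∞)². Define Φ on L²(Ω × [0,t_0]) by Φ(u)(t,x) = u_0(x) + ∫_0^t L_n u(s,·)(x) ds. Then for all u, v ∈ L²(Ω × [0,t_0]) and all t ∈ [0,t_0], ∫_Ω |Φ(u)(t,x) − Φ(v)(t,x)|² dx ≤ 4 C t² |Ω|² · sup_{s∈[0,t_0]} ∫_Ω |u(s,x) − v(s,x)|² dx. Consequently, if t_0 < 1/(2|Ω|√C), then Φ is a contraction on L²(Ω × [0,t_0]) equipped with the norm ‖f‖_{2,∞} = sup_{t∈[0,t_0]} (∫_Ω f(t,x)² dx)^{1/2}. -/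

import Mathlib

/-! Since `L_n` is linear, `Φ(u) - Φ(v)` is the time integral of `L_n w` with `w = u - v`. Each
kernel is bounded on `Ω̄ × Ω̄`, so `|L_n w(s)(x)| ≤ M (‖w(s)‖₁ + |Ω| |w(s, x)|)` with
`M = ‖J‖_∞ + 2‖R‖_∞ + ‖G‖_∞ = √C`. Cauchy–Schwarz in time, and in space in the form
`‖w(s)‖₁² ≤ |Ω| ‖w(s)‖₂²`, then gives
`‖Φ(u)(t) - Φ(v)(t)‖₂² ≤ 4 M² |Ω|² t ∫₀ᵗ ‖w(s)‖₂² ds ≤ 4 C |Ω|² t² sup_s ‖w(s)‖₂²`,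
and taking square roots yields the contraction constant `2 |Ω| √C t₀`. -/

open MeasureTheory Set Filter Topology Bornology

/-- Characteristic function of a set, real-valued. -/
noncomputable def chi {α : Type*} (A : Set α) (x : α) : ℝ :=
  @ite _ (x ∈ A) (Classical.propDecidable _) 1 0

/-- The nonlocal operator `L_n` associated with the partition `(A, B)` of `Ω̄`
and the kernels `J, G, R`. -/
noncomputable def Lop {N : ℕ} (Ω A B : Set (Fin N → ℝ))
    (J G R : (Fin N → ℝ) → (Fin N → ℝ) → ℝ) (f : (Fin N → ℝ) → ℝ) (x : Fin N → ℝ) : ℝ :=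
  chi A x * (∫ y in Ω, chi A y * J x y * (f y - f x))
    + chi B x * (∫ y in Ω, chi B y * G x y * (f y - f x))
    + chi A x * (∫ y in Ω, chi B y * R x y * (f y - f x))
    + chi B x * (∫ y in Ω, chi A y * R x y * (f y - f x))

/-- Hypothesis (H) on a kernel: continuity, nonnegativity, positivity on the diagonal,
symmetry, and unit total mass. -/
def KernelH {N : ℕ} (V : (Fin N → ℝ) → (Fin N → ℝ) → ℝ) : Prop :=
  Continuous (fun p : (Fin N → ℝ) × (Fin N → ℝ) => V p.1 p.2) ∧
    (∀ x y, 0 ≤ V x y) ∧ (∀ x, 0 < V x x) ∧ (∀ x y, V x y = V y x) ∧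
    (∀ x, (∫ y, V x y) = 1)

/-- The fixed point map `Φ` of the integral formulation of the evolution problem. -/
noncomputable def Phi {N : ℕ} (Ω A B : Set (Fin N → ℝ))
    (J G R : (Fin N → ℝ) → (Fin N → ℝ) → ℝ) (u0 : (Fin N → ℝ) → ℝ)
    (u : ℝ → (Fin N → ℝ) → ℝ) (t : ℝ) (x : Fin N → ℝ) : ℝ :=
  u0 x + ∫ s in Set.Ioc (0 : ℝ) t, Lop Ω A B J G R (u s) x

section MeasureLemmas

variable {α β : Type*} [MeasurableSpace α] [MeasurableSpace β] {μ : Measure α}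

lemma sq_integral_le_measureReal_mul_integral_sq [IsFiniteMeasure μ] {φ : α → ℝ}
    (hφ : MemLp φ 2 μ) : (∫ a, φ a ∂μ) ^ 2 ≤ μ.real univ * ∫ a, φ a ^ 2 ∂μ := by
  have hHolder := integral_mul_le_Lp_mul_Lq_of_nonneg (p := 2) (q := 2) (μ := μ)
    (f := fun a => |φ a|) (g := fun _ => 1) Real.HolderConjugate.two_two
    (ae_of_all _ fun a => abs_nonneg (φ a)) (ae_of_all _ fun _ => zero_le_one)
    (by simpa [Real.norm_eq_abs] using hφ.norm) (memLp_const 1)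
  simp only [mul_one, Real.rpow_two, sq_abs, one_pow, integral_const, smul_eq_mul] at hHolder
  have hI : 0 ≤ ∫ a, φ a ^ 2 ∂μ := integral_nonneg fun a => sq_nonneg _
  calc (∫ a, φ a ∂μ) ^ 2 ≤ (∫ a, |φ a| ∂μ) ^ 2 := by
        rw [← sq_abs]; gcongr; exact abs_integral_le_integral_abs
    _ ≤ ((∫ a, φ a ^ 2 ∂μ) ^ (1 / 2 : ℝ) * μ.real univ ^ (1 / 2 : ℝ)) ^ 2 :=
        pow_le_pow_left₀ (integral_nonneg fun a => abs_nonneg _) hHolder 2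
    _ = μ.real univ * ∫ a, φ a ^ 2 ∂μ := by
        rw [mul_pow, ← Real.sqrt_eq_rpow, ← Real.sqrt_eq_rpow, Real.sq_sqrt hI,
          Real.sq_sqrt measureReal_nonneg, mul_comm]

lemma abs_integral_sub_integral_le {f g h F : α → ℝ} (hh : AEStronglyMeasurable h μ)
    (hF : Integrable F μ) (hhF : ∀ᵐ a ∂μ, |h a| ≤ F a) (hfg : ∀ᵐ a ∂μ, f a - g a = h a) :
    |∫ a, f a ∂μ - ∫ a, g a ∂μ| ≤ ∫ a, F a ∂μ := by
  have hhi : Integrable h μ := hF.mono' hh hhF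
  have hF0 : 0 ≤ ∫ a, F a ∂μ :=
    integral_nonneg_of_ae (hhF.mono fun a ha => (abs_nonneg _).trans ha)
  by_cases hf : Integrable f μ
  · have hg : Integrable g μ :=
      (hf.sub hhi).congr (hfg.mono fun a ha => by simp only [Pi.sub_apply]; linarith)
    rw [← integral_sub hf hg, integral_congr_ae hfg]
    exact (abs_integral_le_integral_abs).trans (integral_mono_ae hhi.abs hF hhF)
  · -- `f` and `g` differ by an integrable function, so both integrals take the junk value `0`.
    have hg : ¬ Integrable g μ := fun hg =>
      hf ((hg.add hhi).congr (hfg.mono fun a ha => by simp only [Pi.add_apply]; linarith))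
    rwa [integral_undef hf, integral_undef hg, sub_zero, abs_zero]

lemma abs_integral_mul_sub_const_le [IsFiniteMeasure μ] {k f : α → ℝ} {M : ℝ}
    (hk : AEStronglyMeasurable k μ) (hkM : ∀ᵐ a ∂μ, |k a| ≤ M) (hf : Integrable f μ) (c : ℝ) :
    |∫ a, k a * (f a - c) ∂μ| ≤ M * (∫ a, |f a| ∂μ + μ.real univ * |c|) := by
  have hdom : Integrable (fun a => M * (|f a| + |c|)) μ :=
    (hf.abs.add (integrable_const _)).const_mul M
  calc |∫ a, k a * (f a - c) ∂μ| ≤ ∫ a, M * (|f a| + |c|) ∂μ := by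
        refine (abs_integral_le_integral_abs).trans (integral_mono_ae ?_ hdom ?_)
        · exact ((hf.sub (integrable_const c)).bdd_mul hk hkM).abs
        · filter_upwards [hkM] with a ha
          rw [abs_mul]
          exact mul_le_mul ha (abs_sub _ _) (abs_nonneg _) ((abs_nonneg _).trans ha)
    _ = M * (∫ a, |f a| ∂μ + μ.real univ * |c|) := by
        rw [integral_const_mul, integral_add hf.abs (integrable_const _), integral_const,
          smul_eq_mul]

lemma integral_prod_le_measureReal_mul [IsFiniteMeasure μ] {ν : Measure β} [SFinite ν]
    {f : α × β → ℝ} (hf : Integrable f (μ.prod ν)) {S : ℝ}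
    (hS : ∀ᵐ s ∂μ, ∫ y, f (s, y) ∂ν ≤ S) : ∫ p, f p ∂(μ.prod ν) ≤ μ.real univ * S := by
  rw [integral_prod f hf]
  refine (integral_mono_ae hf.integral_prod_left (integrable_const S) hS).trans_eq ?_
  rw [integral_const, smul_eq_mul]

end MeasureLemmas

section SliceEstimates

variable {α β : Type*} [MeasurableSpace α] [MeasurableSpace β]
  {ν : Measure α} {μ : Measure β} [IsFiniteMeasure ν] [IsFiniteMeasure μ] {W : α × β → ℝ}

lemma ae_sq_integral_abs_slice_le (hW : MemLp W 2 (ν.prod μ)) :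
    ∀ᵐ s ∂ν, (∫ y, |W (s, y)| ∂μ) ^ 2 ≤ μ.real univ * ∫ y, W (s, y) ^ 2 ∂μ := by
  filter_upwards [hW.aestronglyMeasurable.prodMk_left, hW.integrable_sq.prod_right_ae]
    with s hsm hsq
  have hslice : MemLp (fun y => W (s, y)) 2 μ := (memLp_two_iff_integrable_sq hsm).mpr hsq
  simpa only [Pi.abs_apply, sq_abs] using sq_integral_le_measureReal_mul_integral_sq hslice.abs

lemma memLp_two_integral_abs_slice (hW : MemLp W 2 (ν.prod μ)) :
    MemLp (fun s => ∫ y, |W (s, y)| ∂μ) 2 ν := by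
  have hint : Integrable (fun s => ∫ y, |W (s, y)| ∂μ) ν := by
    simpa only [Real.norm_eq_abs] using (hW.integrable one_le_two).integral_norm_prod_left
  refine (memLp_two_iff_integrable_sq hint.aestronglyMeasurable).mpr
    ((hW.integrable_sq.integral_prod_left.const_mul (μ.real univ)).mono'
      (hint.aestronglyMeasurable.pow 2) ?_)
  filter_upwards [ae_sq_integral_abs_slice_le hW] with s hs
  rwa [Real.norm_of_nonneg (sq_nonneg _)]

lemma integral_sq_le_of_abs_le_integral_slice {M : ℝ} (hW : MemLp W 2 (ν.prod μ)) {D : β → ℝ}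
    (hD : ∀ᵐ x ∂μ, |D x| ≤
      M * ∫ s, ((∫ y, |W (s, y)| ∂μ) + μ.real univ * |W (s, x)|) ∂ν) :
    ∫ x, D x ^ 2 ∂μ ≤
      4 * M ^ 2 * μ.real univ ^ 2 * ν.real univ * ∫ p, W p ^ 2 ∂(ν.prod μ) := by
  set m := μ.real univ
  set τ := ν.real univ
  set a : α → ℝ := fun s => ∫ y, |W (s, y)| ∂μ
  have ha : MemLp a 2 ν := memLp_two_integral_abs_slice hW
  have hWsq : Integrable (fun p => W p ^ 2) (ν.prod μ) := hW.integrable_sq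
  have hslice : ∀ᵐ x ∂μ, MemLp (fun s => W (s, x)) 2 ν := by
    filter_upwards [hW.aestronglyMeasurable.prodMk_right, hWsq.prod_left_ae] with x hxm hxsq
    exact (memLp_two_iff_integrable_sq hxm).mpr hxsq
  have hpoint : ∀ᵐ x ∂μ, D x ^ 2 ≤
      2 * M ^ 2 * τ * (∫ s, a s ^ 2 ∂ν + m ^ 2 * ∫ s, W (s, x) ^ 2 ∂ν) := by
    filter_upwards [hD, hslice] with x hDx hx
    have hF : MemLp (fun s => a s + m * |W (s, x)|) 2 ν := ha.add (hx.abs.const_mul m)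
    calc D x ^ 2 ≤ M ^ 2 * (∫ s, (a s + m * |W (s, x)|) ∂ν) ^ 2 := by
          rw [← mul_pow, ← sq_abs]
          exact pow_le_pow_left₀ (abs_nonneg _) hDx 2
      _ ≤ M ^ 2 * (τ * ∫ s, (a s + m * |W (s, x)|) ^ 2 ∂ν) := by
          gcongr; exact sq_integral_le_measureReal_mul_integral_sq hF
      _ ≤ M ^ 2 * (τ * ∫ s, 2 * (a s ^ 2 + m ^ 2 * W (s, x) ^ 2) ∂ν) := by
          have hG : Integrable (fun s => 2 * (a s ^ 2 + m ^ 2 * W (s, x) ^ 2)) ν :=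
            (ha.integrable_sq.add (hx.integrable_sq.const_mul _)).const_mul 2
          gcongr M ^ 2 * (τ * ?_)
          refine integral_mono hF.integrable_sq hG fun s => ?_
          nlinarith [sq_nonneg (a s - m * |W (s, x)|), sq_abs (W (s, x))]
      _ = 2 * M ^ 2 * τ * (∫ s, a s ^ 2 ∂ν + m ^ 2 * ∫ s, W (s, x) ^ 2 ∂ν) := by
          rw [integral_const_mul, integral_add ha.integrable_sq
            (hx.integrable_sq.const_mul _), integral_const_mul]
          ring
  have hWx : Integrable (fun x => ∫ s, W (s, x) ^ 2 ∂ν) μ := hWsq.swap.integral_prod_left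
  have ha_sq : ∫ s, a s ^ 2 ∂ν ≤ m * ∫ p, W p ^ 2 ∂(ν.prod μ) := by
    rw [integral_prod _ hWsq, ← integral_const_mul]
    exact integral_mono_ae ha.integrable_sq (hWsq.integral_prod_left.const_mul m)
      (ae_sq_integral_abs_slice_le hW)
  calc ∫ x, D x ^ 2 ∂μ
      ≤ ∫ x, 2 * M ^ 2 * τ * (∫ s, a s ^ 2 ∂ν + m ^ 2 * ∫ s, W (s, x) ^ 2 ∂ν) ∂μ :=
        integral_mono_of_nonneg (ae_of_all _ fun x => sq_nonneg _)
          (((integrable_const _).add (hWx.const_mul _)).const_mul _)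
          hpoint
    _ = 2 * M ^ 2 * τ * (m * ∫ s, a s ^ 2 ∂ν + m ^ 2 * ∫ p, W p ^ 2 ∂(ν.prod μ)) := by
        rw [integral_const_mul, integral_add (integrable_const _)
          (hWx.const_mul _), integral_const, integral_const_mul,
          smul_eq_mul, integral_prod_symm _ hWsq]
    _ ≤ 2 * M ^ 2 * τ * (m * (m * ∫ p, W p ^ 2 ∂(ν.prod μ))
          + m ^ 2 * ∫ p, W p ^ 2 ∂(ν.prod μ)) := by
        gcongr
    _ = 4 * M ^ 2 * m ^ 2 * τ * ∫ p, W p ^ 2 ∂(ν.prod μ) := by ring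

end SliceEstimates

lemma abs_chi_le_one {X : Type*} (P : Set X) (x : X) : |chi P x| ≤ 1 := by
  unfold chi; split <;> norm_num

lemma measurable_chi {X : Type*} [MeasurableSpace X] {P : Set X} (hP : MeasurableSet P) :
    Measurable (chi P) := by
  have h : chi P = P.indicator (fun _ => (1 : ℝ)) := by
    funext x
    by_cases hx : x ∈ P <;> simp [chi, hx]
  rw [h]
  exact measurable_const.indicator hP

lemma ae_restrict_mem_closure {X : Type*} [TopologicalSpace X] [MeasurableSpace X]
    [OpensMeasurableSpace X] {μ : Measure X} {s : Set X} : ∀ᵐ y ∂(μ.restrict s), y ∈ closure s :=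
  ae_restrict_of_ae_restrict_of_subset subset_closure
    (ae_restrict_mem isClosed_closure.measurableSet)

section NonlocalOperator

variable {N : ℕ} {Ω A B P : Set (Fin N → ℝ)} {J G R K : (Fin N → ℝ) → (Fin N → ℝ) → ℝ}
  {f g : (Fin N → ℝ) → ℝ} {x : Fin N → ℝ}

/-- `‖K‖_∞` on `Ω̄ × Ω̄`. -/
noncomputable def kernelSup (Ω : Set (Fin N → ℝ)) (K : (Fin N → ℝ) → (Fin N → ℝ) → ℝ) : ℝ :=
  sSup ((fun p : (Fin N → ℝ) × (Fin N → ℝ) => |K p.1 p.2|) '' (closure Ω ×ˢ closure Ω))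

lemma kernelSup_nonneg : 0 ≤ kernelSup Ω K :=
  Real.sSup_nonneg (by rintro _ ⟨p, -, rfl⟩; exact abs_nonneg _)

lemma abs_le_kernelSup (hΩ : IsBounded Ω)
    (hK : Continuous fun p : (Fin N → ℝ) × (Fin N → ℝ) => K p.1 p.2)
    {y : Fin N → ℝ} (hx : x ∈ closure Ω) (hy : y ∈ closure Ω) : |K x y| ≤ kernelSup Ω K :=
  le_csSup ((hΩ.isCompact_closure.prod hΩ.isCompact_closure).bddAbove_image hK.abs.continuousOn)
    ⟨(x, y), ⟨hx, hy⟩, rfl⟩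

lemma measurable_chi_mul_kernel (hP : MeasurableSet P)
    (hK : Continuous fun p : (Fin N → ℝ) × (Fin N → ℝ) => K p.1 p.2) (x : Fin N → ℝ) :
    Measurable fun y => chi P y * K x y :=
  (measurable_chi hP).mul (hK.comp (continuous_const.prodMk continuous_id)).measurable

lemma abs_chi_mul_integral_le (hΩ : IsBounded Ω)
    (hK : Continuous fun p : (Fin N → ℝ) × (Fin N → ℝ) => K p.1 p.2) (hP : MeasurableSet P)
    (hf : Integrable f (volume.restrict Ω)) (hx : x ∈ closure Ω) (Q : Set (Fin N → ℝ)) :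
    |chi Q x * ∫ y in Ω, chi P y * K x y * (f y - f x)| ≤
      kernelSup Ω K * ((∫ y in Ω, |f y|) + volume.real Ω * |f x|) := by
  have : IsFiniteMeasure (volume.restrict Ω) := isFiniteMeasure_restrict.mpr hΩ.measure_lt_top.ne
  have hbound := abs_integral_mul_sub_const_le (k := fun y => chi P y * K x y)
    (measurable_chi_mul_kernel hP hK x).aestronglyMeasurable
    (ae_restrict_mem_closure.mono fun y hy => by
      rw [abs_mul]
      exact (mul_le_of_le_one_left (abs_nonneg _) (abs_chi_le_one P y)).trans
        (abs_le_kernelSup hΩ hK hx hy)) hf (f x)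
  rw [measureReal_restrict_apply_univ] at hbound
  rw [abs_mul]
  exact (mul_le_of_le_one_left (abs_nonneg _) (abs_chi_le_one Q x)).trans hbound

lemma integrable_chi_mul_kernel_mul_sub (hΩ : IsBounded Ω)
    (hK : Continuous fun p : (Fin N → ℝ) × (Fin N → ℝ) => K p.1 p.2) (hP : MeasurableSet P)
    (hf : Integrable f (volume.restrict Ω)) (hx : x ∈ closure Ω) :
    Integrable (fun y => chi P y * K x y * (f y - f x)) (volume.restrict Ω) := by
  have : IsFiniteMeasure (volume.restrict Ω) := isFiniteMeasure_restrict.mpr hΩ.measure_lt_top.ne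
  have hbound : ∀ᵐ y ∂(volume.restrict Ω), ‖chi P y * K x y‖ ≤ kernelSup Ω K :=
    ae_restrict_mem_closure.mono fun y hy => by
      rw [Real.norm_eq_abs, abs_mul]
      exact (mul_le_of_le_one_left (abs_nonneg _) (abs_chi_le_one P y)).trans
        (abs_le_kernelSup hΩ hK hx hy)
  exact (hf.sub (integrable_const (f x))).bdd_mul
    (measurable_chi_mul_kernel hP hK x).aestronglyMeasurable hbound

lemma abs_Lop_le (hΩ : IsBounded Ω)
    (hJ : Continuous fun p : (Fin N → ℝ) × (Fin N → ℝ) => J p.1 p.2)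
    (hG : Continuous fun p : (Fin N → ℝ) × (Fin N → ℝ) => G p.1 p.2)
    (hR : Continuous fun p : (Fin N → ℝ) × (Fin N → ℝ) => R p.1 p.2)
    (hA : MeasurableSet A) (hB : MeasurableSet B)
    (hf : Integrable f (volume.restrict Ω)) (hx : x ∈ closure Ω) :
    |Lop Ω A B J G R f x| ≤ (kernelSup Ω J + 2 * kernelSup Ω R + kernelSup Ω G) *
      ((∫ y in Ω, |f y|) + volume.real Ω * |f x|) := by
  have hAA := abs_chi_mul_integral_le hΩ hJ hA hf hx A
  have hBB := abs_chi_mul_integral_le hΩ hG hB hf hx B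
  have hAB := abs_chi_mul_integral_le hΩ hR hB hf hx A
  have hBA := abs_chi_mul_integral_le hΩ hR hA hf hx B
  unfold Lop
  refine (abs_add_le _ _).trans ?_
  refine (add_le_add_left (abs_add_le _ _) _).trans ?_
  refine (add_le_add_left (add_le_add_left (abs_add_le _ _) _) _).trans ?_
  linarith

lemma Lop_sub (hΩ : IsBounded Ω)
    (hJ : Continuous fun p : (Fin N → ℝ) × (Fin N → ℝ) => J p.1 p.2)
    (hG : Continuous fun p : (Fin N → ℝ) × (Fin N → ℝ) => G p.1 p.2)
    (hR : Continuous fun p : (Fin N → ℝ) × (Fin N → ℝ) => R p.1 p.2)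
    (hA : MeasurableSet A) (hB : MeasurableSet B)
    (hf : Integrable f (volume.restrict Ω)) (hg : Integrable g (volume.restrict Ω))
    (hx : x ∈ closure Ω) :
    Lop Ω A B J G R f x - Lop Ω A B J G R g x = Lop Ω A B J G R (fun y => f y - g y) x := by
  have hpiece : ∀ K : (Fin N → ℝ) → (Fin N → ℝ) → ℝ,
      (Continuous fun p : (Fin N → ℝ) × (Fin N → ℝ) => K p.1 p.2) →
      ∀ P : Set (Fin N → ℝ), MeasurableSet P →
      ∫ y in Ω, chi P y * K x y * ((f y - g y) - (f x - g x)) =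
        (∫ y in Ω, chi P y * K x y * (f y - f x)) - ∫ y in Ω, chi P y * K x y * (g y - g x) := by
    intro K hK P hP
    rw [← integral_sub (integrable_chi_mul_kernel_mul_sub hΩ hK hP hf hx)
      (integrable_chi_mul_kernel_mul_sub hΩ hK hP hg hx)]
    congr 1 with y
    ring
  unfold Lop
  rw [hpiece J hJ A hA, hpiece G hG B hB, hpiece R hR B hB, hpiece R hR A hA]
  ring

lemma Lop_congr_ae {f' : (Fin N → ℝ) → ℝ} (hae : f =ᵐ[volume.restrict Ω] f') (hx : f x = f' x) :
    Lop Ω A B J G R f x = Lop Ω A B J G R f' x := by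
  have hpiece : ∀ (K : (Fin N → ℝ) → (Fin N → ℝ) → ℝ) (P : Set (Fin N → ℝ)),
      ∫ y in Ω, chi P y * K x y * (f y - f x) = ∫ y in Ω, chi P y * K x y * (f' y - f' x) :=
    fun K P => integral_congr_ae (hae.mono fun y hy => by simp only [hy, hx])
  unfold Lop
  rw [hpiece J A, hpiece G B, hpiece R B, hpiece R A]

lemma aestronglyMeasurable_Lop_slice {α : Type*} [MeasurableSpace α] {ν : Measure α} [SFinite ν]
    (hJ : Continuous fun p : (Fin N → ℝ) × (Fin N → ℝ) => J p.1 p.2)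
    (hG : Continuous fun p : (Fin N → ℝ) × (Fin N → ℝ) => G p.1 p.2)
    (hR : Continuous fun p : (Fin N → ℝ) × (Fin N → ℝ) => R p.1 p.2)
    (hA : MeasurableSet A) (hB : MeasurableSet B)
    {W : α × (Fin N → ℝ) → ℝ} (hW : StronglyMeasurable W) (x : Fin N → ℝ) :
    AEStronglyMeasurable (fun s => Lop Ω A B J G R (fun y => W (s, y)) x) ν := by
  have hpiece : ∀ K : (Fin N → ℝ) → (Fin N → ℝ) → ℝ,
      (Continuous fun p : (Fin N → ℝ) × (Fin N → ℝ) => K p.1 p.2) →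
      ∀ P : Set (Fin N → ℝ), MeasurableSet P →
      AEStronglyMeasurable (fun s => ∫ y in Ω, chi P y * K x y * (W (s, y) - W (s, x))) ν :=
    fun K hK P hP => by
      have hm : Measurable fun q : α × (Fin N → ℝ) => chi P q.2 * K x q.2 * (W q - W (q.1, x)) :=
        ((measurable_chi_mul_kernel hP hK x).comp measurable_snd).mul
          (hW.measurable.sub (hW.measurable.comp (measurable_fst.prodMk measurable_const)))
      exact hm.aestronglyMeasurable.integral_prod_right' (ν := volume.restrict Ω)
  unfold Lop
  exact ((((hpiece J hJ A hA).const_mul _).add ((hpiece G hG B hB).const_mul _)).add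
    ((hpiece R hR B hB).const_mul _)).add ((hpiece R hR A hA).const_mul _)

end NonlocalOperator

section Suprema

variable {ι : Type*} {I : Set ι} {f g : ι → ℝ}

lemma le_biSup_of_bddAbove_image (hf : BddAbove (f '' I)) {i : ι} (hi : i ∈ I) :
    f i ≤ ⨆ j ∈ I, f j :=
  le_ciSup₂ (f := fun j (_ : j ∈ I) => f j)
    (hf.mono (iUnion_subset fun _ => range_subset_iff.2 fun hj => mem_image_of_mem f hj)) i hi

lemma biSup_sqrt_le_mul_biSup_sqrt {k : ℝ} (hk : 0 ≤ k) (hf0 : ∀ i, 0 ≤ f i)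
    (hf : BddAbove (f '' I)) (hg : ∀ i ∈ I, g i ≤ k ^ 2 * ⨆ j ∈ I, f j) :
    ⨆ i ∈ I, √(g i) ≤ k * ⨆ j ∈ I, √(f j) := by
  set T := ⨆ j ∈ I, √(f j)
  have hT : 0 ≤ T := Real.iSup_nonneg fun _ => Real.iSup_nonneg fun _ => Real.sqrt_nonneg _
  have hsqrt : BddAbove ((fun j => √(f j)) '' I) := by
    simpa only [image_image] using Real.sqrt_monotone.map_bddAbove hf
  have hS : ⨆ j ∈ I, f j ≤ T ^ 2 := by
    refine Real.iSup_le (fun j => Real.iSup_le (fun hj => ?_) (sq_nonneg T)) (sq_nonneg T)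
    rw [← Real.sq_sqrt (hf0 j)]
    exact pow_le_pow_left₀ (Real.sqrt_nonneg _) (le_biSup_of_bddAbove_image hsqrt hj) 2
  refine Real.iSup_le (fun i => Real.iSup_le (fun hi => ?_) (by positivity)) (by positivity)
  calc √(g i) ≤ √((k * T) ^ 2) :=
        Real.sqrt_le_sqrt ((hg i hi).trans (by rw [mul_pow]; gcongr))
    _ = k * T := Real.sqrt_sq (by positivity)

end Suprema

section TimeIntegral

variable {N : ℕ} {Ω A B : Set (Fin N → ℝ)} {J G R : (Fin N → ℝ) → (Fin N → ℝ) → ℝ}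
  {α : Type*} [MeasurableSpace α] {ν : Measure α}

lemma integral_Lop_congr_ae [SFinite ν] {u : α → (Fin N → ℝ) → ℝ} {U : α × (Fin N → ℝ) → ℝ}
    (h : (fun p : α × (Fin N → ℝ) => u p.1 p.2) =ᵐ[ν.prod (volume.restrict Ω)] U) :
    (fun x => ∫ s, Lop Ω A B J G R (u s) x ∂ν) =ᵐ[volume.restrict Ω]
      fun x => ∫ s, Lop Ω A B J G R (fun y => U (s, y)) x ∂ν := by
  have hslice : ∀ᵐ s ∂ν, u s =ᵐ[volume.restrict Ω] fun y => U (s, y) :=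
    Measure.ae_ae_of_ae_prod h
  have hpoint : ∀ᵐ x ∂(volume.restrict Ω), ∀ᵐ s ∂ν, u s x = U (s, x) :=
    Measure.ae_ae_of_ae_prod (Measure.measurePreserving_swap.quasiMeasurePreserving.ae h)
  filter_upwards [hpoint] with x hx
  exact integral_congr_ae (by filter_upwards [hslice, hx] with s h1 h2; exact Lop_congr_ae h1 h2)

lemma ae_abs_integral_Lop_sub_le [IsFiniteMeasure ν] (hΩ : IsBounded Ω)
    (hJ : Continuous fun p : (Fin N → ℝ) × (Fin N → ℝ) => J p.1 p.2)
    (hG : Continuous fun p : (Fin N → ℝ) × (Fin N → ℝ) => G p.1 p.2)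
    (hR : Continuous fun p : (Fin N → ℝ) × (Fin N → ℝ) => R p.1 p.2)
    (hA : MeasurableSet A) (hB : MeasurableSet B)
    {U V : α × (Fin N → ℝ) → ℝ} (hU : StronglyMeasurable U) (hV : StronglyMeasurable V)
    (hU1 : Integrable U (ν.prod (volume.restrict Ω)))
    (hV1 : Integrable V (ν.prod (volume.restrict Ω))) :
    ∀ᵐ x ∂(volume.restrict Ω),
      |∫ s, Lop Ω A B J G R (fun y => U (s, y)) x ∂ν -
          ∫ s, Lop Ω A B J G R (fun y => V (s, y)) x ∂ν| ≤
        (kernelSup Ω J + 2 * kernelSup Ω R + kernelSup Ω G) *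
          ∫ s, ((∫ y in Ω, |U (s, y) - V (s, y)|) + volume.real Ω * |U (s, x) - V (s, x)|) ∂ν := by
  have hW : Integrable (fun p => U p - V p) (ν.prod (volume.restrict Ω)) := hU1.sub hV1
  have ha : Integrable (fun s => ∫ y in Ω, |U (s, y) - V (s, y)|) ν := by
    simpa only [Real.norm_eq_abs] using hW.integral_norm_prod_left
  filter_upwards [ae_restrict_mem_closure, hW.prod_left_ae] with x hx hWx
  rw [← integral_const_mul]
  refine abs_integral_sub_integral_le
    (aestronglyMeasurable_Lop_slice (Ω := Ω) (W := fun p => U p - V p) hJ hG hR hA hB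
      (hU.sub hV) x)
    ((ha.add (hWx.abs.const_mul _)).const_mul _) ?_ ?_
  · filter_upwards [hW.prod_right_ae] with s hs
    exact abs_Lop_le hΩ hJ hG hR hA hB hs hx
  · filter_upwards [hU1.prod_right_ae, hV1.prod_right_ae] with s hUs hVs
    exact Lop_sub hΩ hJ hG hR hA hB hUs hVs hx

lemma integral_sq_integral_Lop_sub_le [IsFiniteMeasure ν] (hΩ : IsBounded Ω)
    (hJ : Continuous fun p : (Fin N → ℝ) × (Fin N → ℝ) => J p.1 p.2)
    (hG : Continuous fun p : (Fin N → ℝ) × (Fin N → ℝ) => G p.1 p.2)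
    (hR : Continuous fun p : (Fin N → ℝ) × (Fin N → ℝ) => R p.1 p.2)
    (hA : MeasurableSet A) (hB : MeasurableSet B) {u v : α → (Fin N → ℝ) → ℝ}
    (hu : MemLp (fun p : α × (Fin N → ℝ) => u p.1 p.2) 2 (ν.prod (volume.restrict Ω)))
    (hv : MemLp (fun p : α × (Fin N → ℝ) => v p.1 p.2) 2 (ν.prod (volume.restrict Ω))) :
    ∫ x in Ω, (∫ s, Lop Ω A B J G R (u s) x ∂ν - ∫ s, Lop Ω A B J G R (v s) x ∂ν) ^ 2 ≤
      4 * (kernelSup Ω J + 2 * kernelSup Ω R + kernelSup Ω G) ^ 2 * volume.real Ω ^ 2 *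
        ν.real univ * ∫ p, (u p.1 p.2 - v p.1 p.2) ^ 2 ∂(ν.prod (volume.restrict Ω)) := by
  have : IsFiniteMeasure (volume.restrict Ω) := isFiniteMeasure_restrict.mpr hΩ.measure_lt_top.ne
  -- `u` is only a.e. measurable; pass to measurable representatives, which change neither side.
  set U := hu.1.mk _
  set V := hv.1.mk _
  have hU2 : MemLp U 2 (ν.prod (volume.restrict Ω)) := hu.ae_eq hu.1.ae_eq_mk
  have hV2 : MemLp V 2 (ν.prod (volume.restrict Ω)) := hv.ae_eq hv.1.ae_eq_mk
  have hLHS : (fun x => (∫ s, Lop Ω A B J G R (u s) x ∂ν - ∫ s, Lop Ω A B J G R (v s) x ∂ν) ^ 2)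
      =ᵐ[volume.restrict Ω] fun x => (∫ s, Lop Ω A B J G R (fun y => U (s, y)) x ∂ν -
        ∫ s, Lop Ω A B J G R (fun y => V (s, y)) x ∂ν) ^ 2 := by
    filter_upwards [integral_Lop_congr_ae hu.1.ae_eq_mk, integral_Lop_congr_ae hv.1.ae_eq_mk]
      with x hux hvx
    rw [hux, hvx]
  have hRHS : (fun p : α × (Fin N → ℝ) => (u p.1 p.2 - v p.1 p.2) ^ 2)
      =ᵐ[ν.prod (volume.restrict Ω)] fun p => (U p - V p) ^ 2 := by
    filter_upwards [hu.1.ae_eq_mk, hv.1.ae_eq_mk] with p hup hvp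
    rw [hup, hvp]
  rw [integral_congr_ae hLHS, integral_congr_ae hRHS]
  have hD := ae_abs_integral_Lop_sub_le hΩ hJ hG hR hA hB hu.1.stronglyMeasurable_mk
    hv.1.stronglyMeasurable_mk (hU2.integrable one_le_two) (hV2.integrable one_le_two)
  rw [← measureReal_restrict_apply_univ] at hD
  have hbound := integral_sq_le_of_abs_le_integral_slice (hU2.sub hV2) hD
  rwa [measureReal_restrict_apply_univ] at hbound

lemma integral_sq_Phi_sub_le (hΩ : IsBounded Ω)
    (hJ : Continuous fun p : (Fin N → ℝ) × (Fin N → ℝ) => J p.1 p.2)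
    (hG : Continuous fun p : (Fin N → ℝ) × (Fin N → ℝ) => G p.1 p.2)
    (hR : Continuous fun p : (Fin N → ℝ) × (Fin N → ℝ) => R p.1 p.2)
    (hA : MeasurableSet A) (hB : MeasurableSet B) (u0 : (Fin N → ℝ) → ℝ)
    {t0 t : ℝ} (ht : t ∈ Icc 0 t0) {u v : ℝ → (Fin N → ℝ) → ℝ}
    (hu : MemLp (fun p : ℝ × (Fin N → ℝ) => u p.1 p.2) 2
      (((volume : Measure ℝ).restrict (Icc 0 t0)).prod (volume.restrict Ω)))
    (hv : MemLp (fun p : ℝ × (Fin N → ℝ) => v p.1 p.2) 2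
      (((volume : Measure ℝ).restrict (Icc 0 t0)).prod (volume.restrict Ω)))
    (hbdd : BddAbove ((fun s => ∫ x in Ω, (u s x - v s x) ^ 2) '' Icc 0 t0)) :
    ∫ x in Ω, (Phi Ω A B J G R u0 u t x - Phi Ω A B J G R u0 v t x) ^ 2 ≤
      4 * (kernelSup Ω J + 2 * kernelSup Ω R + kernelSup Ω G) ^ 2 * t ^ 2 * volume.real Ω ^ 2 *
        ⨆ s ∈ Icc 0 t0, ∫ x in Ω, (u s x - v s x) ^ 2 := by
  have hIoc : Ioc 0 t ⊆ Icc 0 t0 := fun s hs => ⟨hs.1.le, hs.2.trans ht.2⟩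
  have hprod : ((volume : Measure ℝ).restrict (Ioc 0 t)).prod (volume.restrict Ω) ≤
      ((volume : Measure ℝ).restrict (Icc 0 t0)).prod (volume.restrict Ω) :=
    Measure.prod_mono (Measure.restrict_mono hIoc le_rfl) le_rfl
  have hu' := hu.mono_measure hprod
  have hv' := hv.mono_measure hprod
  have hlength : ((volume : Measure ℝ).restrict (Ioc 0 t)).real univ = t := by
    rw [measureReal_restrict_apply_univ, Real.volume_real_Ioc_of_le ht.1, sub_zero]
  set M := kernelSup Ω J + 2 * kernelSup Ω R + kernelSup Ω G
  calc ∫ x in Ω, (Phi Ω A B J G R u0 u t x - Phi Ω A B J G R u0 v t x) ^ 2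
      = ∫ x in Ω, ((∫ s in Ioc 0 t, Lop Ω A B J G R (u s) x) -
          ∫ s in Ioc 0 t, Lop Ω A B J G R (v s) x) ^ 2 := by
        simp only [Phi, add_sub_add_left_eq_sub]
    _ ≤ 4 * M ^ 2 * volume.real Ω ^ 2 * t * ∫ p, (u p.1 p.2 - v p.1 p.2) ^ 2
          ∂(((volume : Measure ℝ).restrict (Ioc 0 t)).prod (volume.restrict Ω)) := by
        simpa only [hlength] using integral_sq_integral_Lop_sub_le hΩ hJ hG hR hA hB hu' hv'
    _ ≤ 4 * M ^ 2 * volume.real Ω ^ 2 * t *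
          (t * ⨆ s ∈ Icc 0 t0, ∫ x in Ω, (u s x - v s x) ^ 2) := by
        refine mul_le_mul_of_nonneg_left ?_ (mul_nonneg (by positivity) ht.1)
        simpa only [hlength, Pi.sub_apply] using integral_prod_le_measureReal_mul
          (hu'.sub hv').integrable_sq ((ae_restrict_mem measurableSet_Ioc).mono fun s hs =>
            le_biSup_of_bddAbove_image hbdd (hIoc hs))
    _ = _ := by ring

end TimeIntegral

theorem stmt4_general {N : ℕ} (Ω : Set (Fin N → ℝ))
    (hΩb : IsBounded Ω)
    (J G R : (Fin N → ℝ) → (Fin N → ℝ) → ℝ)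
    (hJ : KernelH J) (hG : KernelH G) (hR : KernelH R)
    (A B : Set (Fin N → ℝ))
    (hBopen : IsOpen B) (hAmeas : MeasurableSet A)
    (u0 : (Fin N → ℝ) → ℝ)
    (t0 : ℝ) (ht0 : 0 < t0)
    (C : ℝ)
    (hC : C = (sSup ((fun p : (Fin N → ℝ) × (Fin N → ℝ) => |J p.1 p.2|) ''
          (closure Ω ×ˢ closure Ω))
        + 2 * sSup ((fun p : (Fin N → ℝ) × (Fin N → ℝ) => |R p.1 p.2|) ''
          (closure Ω ×ˢ closure Ω))
        + sSup ((fun p : (Fin N → ℝ) × (Fin N → ℝ) => |G p.1 p.2|) ''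
          (closure Ω ×ˢ closure Ω))) ^ 2) :
    (∀ u v : ℝ → (Fin N → ℝ) → ℝ,
      MemLp (fun p : ℝ × (Fin N → ℝ) => u p.1 p.2) 2 (((volume : Measure ℝ).restrict (Set.Icc 0 t0)).prod (volume.restrict Ω)) →
      MemLp (fun p : ℝ × (Fin N → ℝ) => v p.1 p.2) 2 (((volume : Measure ℝ).restrict (Set.Icc 0 t0)).prod (volume.restrict Ω)) →
      BddAbove ((fun s => ∫ x in Ω, (u s x - v s x) ^ 2) '' Set.Icc (0 : ℝ) t0) →
      ∀ t ∈ Set.Icc (0 : ℝ) t0,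
        (∫ x in Ω, (Phi Ω A B J G R u0 u t x - Phi Ω A B J G R u0 v t x) ^ 2) ≤
          4 * C * t ^ 2 * ((volume Ω).toReal) ^ 2 *
            ⨆ s ∈ Set.Icc (0 : ℝ) t0, ∫ x in Ω, (u s x - v s x) ^ 2) ∧
    (t0 < 1 / (2 * (volume Ω).toReal * Real.sqrt C) →
      ∃ k : ℝ, 0 ≤ k ∧ k < 1 ∧
        ∀ u v : ℝ → (Fin N → ℝ) → ℝ,
          MemLp (fun p : ℝ × (Fin N → ℝ) => u p.1 p.2) 2 (((volume : Measure ℝ).restrict (Set.Icc 0 t0)).prod (volume.restrict Ω)) →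
          MemLp (fun p : ℝ × (Fin N → ℝ) => v p.1 p.2) 2 (((volume : Measure ℝ).restrict (Set.Icc 0 t0)).prod (volume.restrict Ω)) →
          BddAbove ((fun s => ∫ x in Ω, (u s x - v s x) ^ 2) '' Set.Icc (0 : ℝ) t0) →
          (⨆ t ∈ Set.Icc (0 : ℝ) t0,
              Real.sqrt (∫ x in Ω,
                (Phi Ω A B J G R u0 u t x - Phi Ω A B J G R u0 v t x) ^ 2)) ≤
            k * ⨆ s ∈ Set.Icc (0 : ℝ) t0,
              Real.sqrt (∫ x in Ω, (u s x - v s x) ^ 2)) := by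
  have hCM : C = (kernelSup Ω J + 2 * kernelSup Ω R + kernelSup Ω G) ^ 2 := hC
  have hC0 : 0 ≤ C := hCM ▸ sq_nonneg _
  have hcontr := @integral_sq_Phi_sub_le N Ω A B J G R hΩb hJ.1 hG.1 hR.1 hAmeas
    hBopen.measurableSet u0 t0
  rw [← hCM] at hcontr
  refine ⟨fun u v hu hv hbdd t ht => hcontr ht hu hv hbdd, fun hsmall => ?_⟩
  have hpos : 0 < 2 * (volume Ω).toReal * √C := one_div_pos.mp (ht0.trans hsmall)
  rw [lt_div_iff₀ hpos] at hsmall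
  refine ⟨2 * (volume Ω).toReal * √C * t0, by positivity, by linarith,
    fun u v hu hv hbdd => biSup_sqrt_le_mul_biSup_sqrt (by positivity)
      (fun s => integral_nonneg fun x => sq_nonneg _) hbdd fun t ht => ?_⟩
  have hS : 0 ≤ ⨆ s ∈ Icc (0 : ℝ) t0, ∫ x in Ω, (u s x - v s x) ^ 2 :=
    Real.iSup_nonneg fun s => Real.iSup_nonneg fun _ => integral_nonneg fun x => sq_nonneg _
  calc _ ≤ 4 * C * t ^ 2 * volume.real Ω ^ 2 * ⨆ s ∈ Icc 0 t0, ∫ x in Ω, (u s x - v s x) ^ 2 :=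
        hcontr ht hu hv hbdd
    _ ≤ 4 * C * t0 ^ 2 * volume.real Ω ^ 2 * ⨆ s ∈ Icc 0 t0, ∫ x in Ω, (u s x - v s x) ^ 2 := by
        gcongr
        exacts [ht.1, ht.2]
    _ = _ := by rw [measureReal_def, mul_pow, mul_pow, mul_pow, Real.sq_sqrt hC0]; ring

theorem stmt4 {N : ℕ} (Ω : Set (Fin N → ℝ))
    (hΩo : IsOpen Ω) (hΩb : IsBounded Ω) (hΩc : IsConnected Ω)
    (J G R : (Fin N → ℝ) → (Fin N → ℝ) → ℝ)
    (hJ : KernelH J) (hG : KernelH G) (hR : KernelH R)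
    (A B : Set (Fin N → ℝ))
    (hpart : closure Ω = A ∪ B) (hdisj : A ∩ B = ∅)
    (hBopen : IsOpen B) (hAmeas : MeasurableSet A)
    (u0 : (Fin N → ℝ) → ℝ) (hu0 : MemLp u0 2 (volume.restrict Ω))
    (t0 : ℝ) (ht0 : 0 < t0)
    (C : ℝ)
    (hC : C = (sSup ((fun p : (Fin N → ℝ) × (Fin N → ℝ) => |J p.1 p.2|) ''
          (closure Ω ×ˢ closure Ω))
        + 2 * sSup ((fun p : (Fin N → ℝ) × (Fin N → ℝ) => |R p.1 p.2|) ''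
          (closure Ω ×ˢ closure Ω))
        + sSup ((fun p : (Fin N → ℝ) × (Fin N → ℝ) => |G p.1 p.2|) ''
          (closure Ω ×ˢ closure Ω))) ^ 2) :
    (∀ u v : ℝ → (Fin N → ℝ) → ℝ,
      MemLp (fun p : ℝ × (Fin N → ℝ) => u p.1 p.2) 2 (((volume : Measure ℝ).restrict (Set.Icc 0 t0)).prod (volume.restrict Ω)) →
      MemLp (fun p : ℝ × (Fin N → ℝ) => v p.1 p.2) 2 (((volume : Measure ℝ).restrict (Set.Icc 0 t0)).prod (volume.restrict Ω)) →
      BddAbove ((fun s => ∫ x in Ω, (u s x - v s x) ^ 2) '' Set.Icc (0 : ℝ) t0) →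
      ∀ t ∈ Set.Icc (0 : ℝ) t0,
        (∫ x in Ω, (Phi Ω A B J G R u0 u t x - Phi Ω A B J G R u0 v t x) ^ 2) ≤
          4 * C * t ^ 2 * ((volume Ω).toReal) ^ 2 *
            ⨆ s ∈ Set.Icc (0 : ℝ) t0, ∫ x in Ω, (u s x - v s x) ^ 2) ∧
    (t0 < 1 / (2 * (volume Ω).toReal * Real.sqrt C) →
      ∃ k : ℝ, 0 ≤ k ∧ k < 1 ∧
        ∀ u v : ℝ → (Fin N → ℝ) → ℝ,
          MemLp (fun p : ℝ × (Fin N → ℝ) => u p.1 p.2) 2 (((volume : Measure ℝ).restrict (Set.Icc 0 t0)).prod (volume.restrict Ω)) →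
          MemLp (fun p : ℝ × (Fin N → ℝ) => v p.1 p.2) 2 (((volume : Measure ℝ).restrict (Set.Icc 0 t0)).prod (volume.restrict Ω)) →
          BddAbove ((fun s => ∫ x in Ω, (u s x - v s x) ^ 2) '' Set.Icc (0 : ℝ) t0) →
          (⨆ t ∈ Set.Icc (0 : ℝ) t0,
              Real.sqrt (∫ x in Ω,
                (Phi Ω A B J G R u0 u t x - Phi Ω A B J G R u0 v t x) ^ 2)) ≤
            k * ⨆ s ∈ Set.Icc (0 : ℝ) t0,
              Real.sqrt (∫ x in Ω, (u s x - v s x) ^ 2)) :=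
  stmt4_general Ω hΩb J G R hJ hG hR A B hBopen hAmeas u0 t0 ht0 C hC
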